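/- For any distribution function F with finite mean μ and finite positive variance σ², and for integers k ≥ 1, n ≥ 0, the expectation of the n-th k-th record value satisfies E[(R_n^{(k)} − μ)/σ] ≤ (k^{2(n+1)}(2n)!/((n!)²(2k−1)^{2n+1}) − 1)^{1/2}. -/

import Mathlib

/-!
The substitution `u = 1 - e^{-t}` turns `(-log (1 - u))^n (1 - u)^c du` into the Gamma integrand
`t^n e^{-(c+1)t} dt`, so `∫₀¹ (-log (1 - u))^n (1 - u)^c du = n! / (c + 1)^(n+1)`. Hence the
record density `g = recg k n` has `∫₀¹ g = 1` and `∫₀¹ g² = k^{2(n+1)} (2n)! / ((n!)² (2k-1)^{2n+1})`.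
Under the uniform law on `(0, 1)`, `∫₀¹ Q g - μ` is the covariance of `Q` and `g`, and the
Cauchy–Schwarz inequality bounds it by `σ · (∫₀¹ g² - 1)^{1/2}`.
-/

open MeasureTheory Real

/-- Density of the n-th value of the k-th record from a standard uniform parent. -/
noncomputable def recg (k n : ℕ) (x : ℝ) : ℝ :=
  (k : ℝ) ^ (n + 1) / (Nat.factorial n) * (-Real.log (1 - x)) ^ n * (1 - x) ^ (k - 1)

open Set ProbabilityTheory
open scoped Nat

section CauchySchwarz

variable {Ω : Type*} {mΩ : MeasurableSpace Ω} {μ : Measure Ω}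

theorem sq_integral_mul_le_integral_sq_mul_integral_sq {f g : Ω → ℝ} (hf : MemLp f 2 μ)
    (hg : MemLp g 2 μ) : (∫ ω, f ω * g ω ∂μ) ^ 2 ≤ (∫ ω, f ω ^ 2 ∂μ) * ∫ ω, g ω ^ 2 ∂μ := by
  have inner_toLp : ∀ {u v : Ω → ℝ} (hu : MemLp u 2 μ) (hv : MemLp v 2 μ),
      inner ℝ (hu.toLp u) (hv.toLp v) = ∫ ω, u ω * v ω ∂μ := fun hu hv => by
    rw [L2.inner_def]
    refine integral_congr_ae ?_
    filter_upwards [hu.coeFn_toLp, hv.coeFn_toLp] with ω hu' hv'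
    rw [hu', hv', real_inner_eq_re_inner, RCLike.inner_apply, conj_trivial, mul_comm]
    rfl
  have h := real_inner_mul_inner_self_le (hf.toLp f) (hg.toLp g)
  simpa only [inner_toLp, ← sq] using h

theorem covariance_sq_le_variance_mul_variance [IsFiniteMeasure μ] {X Y : Ω → ℝ}
    (hX : MemLp X 2 μ) (hY : MemLp Y 2 μ) : cov[X, Y; μ] ^ 2 ≤ Var[X; μ] * Var[Y; μ] := by
  rw [covariance, variance_eq_integral hX.aemeasurable, variance_eq_integral hY.aemeasurable]
  exact sq_integral_mul_le_integral_sq_mul_integral_sq (hX.sub (memLp_const _))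
    (hY.sub (memLp_const _))

end CauchySchwarz

theorem image_one_sub_exp_neg_Ioi : (fun t : ℝ => 1 - exp (-t)) '' Ioi 0 = Ioo 0 1 := by
  ext u
  constructor
  · rintro ⟨t, ht, rfl⟩
    have : exp (-t) < 1 := exp_lt_one_iff.2 (neg_lt_zero.2 ht)
    exact ⟨by linarith, by linarith [exp_pos (-t)]⟩
  · rintro ⟨hu0, hu1⟩
    refine ⟨-log (1 - u), neg_pos.2 (log_neg (by linarith) (by linarith)), ?_⟩
    simp [exp_log (by linarith : (0 : ℝ) < 1 - u)]

theorem injOn_one_sub_exp_neg : InjOn (fun t : ℝ => 1 - exp (-t)) (Ioi 0) := fun a _ b _ h => by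
  simpa using exp_injective (sub_right_injective h)

theorem hasDerivAt_one_sub_exp_neg (t : ℝ) :
    HasDerivAt (fun t : ℝ => 1 - exp (-t)) (exp (-t)) t := by
  simpa using ((hasDerivAt_neg t).exp).const_sub 1

theorem integral_Ioo_zero_one_eq_integral_Ioi_one_sub_exp_neg (G : ℝ → ℝ) :
    ∫ u in Ioo 0 1, G u = ∫ t in Ioi 0, exp (-t) * G (1 - exp (-t)) := by
  rw [← image_one_sub_exp_neg_Ioi, integral_image_eq_integral_abs_deriv_smul measurableSet_Ioi
    (fun t _ => (hasDerivAt_one_sub_exp_neg t).hasDerivWithinAt) injOn_one_sub_exp_neg]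
  simp only [abs_of_pos (exp_pos _), smul_eq_mul]

theorem integrableOn_Ioo_zero_one_iff_integrableOn_Ioi_one_sub_exp_neg (G : ℝ → ℝ) :
    IntegrableOn G (Ioo 0 1) ↔ IntegrableOn (fun t => exp (-t) * G (1 - exp (-t))) (Ioi 0) := by
  rw [← image_one_sub_exp_neg_Ioi, integrableOn_image_iff_integrableOn_abs_deriv_smul
    measurableSet_Ioi (fun t _ => (hasDerivAt_one_sub_exp_neg t).hasDerivWithinAt)
    injOn_one_sub_exp_neg]
  simp only [abs_of_pos (exp_pos _), smul_eq_mul]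

theorem integrableOn_pow_mul_exp_neg_mul_Ioi (n : ℕ) {b : ℝ} (hb : 0 < b) :
    IntegrableOn (fun t : ℝ => t ^ n * exp (-(b * t))) (Ioi 0) := by
  have hn : (-1 : ℝ) < n := by linarith [(n.cast_nonneg : (0 : ℝ) ≤ n)]
  refine (integrableOn_rpow_mul_exp_neg_mul_rpow (p := 1) hn one_pos hb).congr_fun
    (fun t _ => ?_) measurableSet_Ioi
  simp [rpow_natCast]

theorem integral_pow_mul_exp_neg_mul_Ioi (n : ℕ) {b : ℝ} (hb : 0 < b) :
    ∫ t in Ioi 0, t ^ n * exp (-(b * t)) = n ! / b ^ (n + 1) := by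
  have h := integral_rpow_mul_exp_neg_mul_Ioi (a := n + 1) (by positivity) hb
  rw [add_sub_cancel_right, Gamma_nat_eq_factorial, ← Nat.cast_add_one] at h
  simp only [rpow_natCast] at h
  rw [h, div_pow, one_pow, one_div_mul_eq_div]

theorem exp_neg_mul_neg_log_pow_mul_pow_comp_one_sub_exp_neg (n c : ℕ) (t : ℝ) :
    exp (-t) * ((-log (1 - (1 - exp (-t)))) ^ n * (1 - (1 - exp (-t))) ^ c)
      = t ^ n * exp (-((c + 1) * t)) := by
  rw [sub_sub_cancel, log_exp, neg_neg, ← exp_nat_mul, show -((c + 1) * t) = c * -t + -t by ring,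
    exp_add]
  ring

theorem integrableOn_neg_log_one_sub_pow_mul_one_sub_pow (n c : ℕ) :
    IntegrableOn (fun u : ℝ => (-log (1 - u)) ^ n * (1 - u) ^ c) (Ioo 0 1) := by
  rw [integrableOn_Ioo_zero_one_iff_integrableOn_Ioi_one_sub_exp_neg]
  exact (integrableOn_pow_mul_exp_neg_mul_Ioi n (by positivity : (0 : ℝ) < c + 1)).congr_fun
    (fun t _ => (exp_neg_mul_neg_log_pow_mul_pow_comp_one_sub_exp_neg n c t).symm)
    measurableSet_Ioi

theorem integral_neg_log_one_sub_pow_mul_one_sub_pow (n c : ℕ) :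
    ∫ u in Ioo 0 1, (-log (1 - u)) ^ n * (1 - u) ^ c = n ! / ((c : ℝ) + 1) ^ (n + 1) := by
  rw [integral_Ioo_zero_one_eq_integral_Ioi_one_sub_exp_neg,
    ← integral_pow_mul_exp_neg_mul_Ioi n (by positivity)]
  exact setIntegral_congr_fun measurableSet_Ioi
    (fun t _ => exp_neg_mul_neg_log_pow_mul_pow_comp_one_sub_exp_neg n c t)

theorem recg_eq_mul (k n : ℕ) (u : ℝ) :
    recg k n u = k ^ (n + 1) / n ! * ((-log (1 - u)) ^ n * (1 - u) ^ (k - 1)) := by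
  rw [recg, mul_assoc]

theorem recg_sq_eq_mul (k n : ℕ) (u : ℝ) :
    recg k n u ^ 2
      = (k ^ (n + 1) / n !) ^ 2 * ((-log (1 - u)) ^ (2 * n) * (1 - u) ^ (2 * (k - 1))) := by
  rw [recg_eq_mul]
  ring

theorem memLp_recg (k n : ℕ) : MemLp (recg k n) 2 (volume.restrict (Ioo 0 1)) := by
  refine (memLp_two_iff_integrable_sq (by unfold recg; fun_prop)).2 ?_
  exact IntegrableOn.congr_fun
    ((integrableOn_neg_log_one_sub_pow_mul_one_sub_pow (2 * n) (2 * (k - 1))).const_mul _)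
    (fun u _ => (recg_sq_eq_mul k n u).symm) measurableSet_Ioo

theorem integral_recg {k : ℕ} (hk : 1 ≤ k) (n : ℕ) : ∫ u in Ioo 0 1, recg k n u = 1 := by
  simp_rw [recg_eq_mul]
  rw [integral_const_mul, integral_neg_log_one_sub_pow_mul_one_sub_pow, Nat.cast_sub hk,
    Nat.cast_one, sub_add_cancel]
  field_simp

theorem integral_recg_sq {k : ℕ} (hk : 1 ≤ k) (n : ℕ) :
    ∫ u in Ioo 0 1, recg k n u ^ 2
      = k ^ (2 * (n + 1)) * (2 * n)! / ((n ! : ℝ) ^ 2 * (2 * k - 1) ^ (2 * n + 1)) := by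
  simp_rw [recg_sq_eq_mul]
  rw [integral_const_mul, integral_neg_log_one_sub_pow_mul_one_sub_pow, Nat.cast_mul,
    Nat.cast_sub hk]
  have : (2 * k - 1 : ℝ) ≠ 0 := by
    have : (1 : ℝ) ≤ k := by exact_mod_cast hk
    linarith
  field_simp
  ring

/-- The expectation is written via the quantile function `Q = F⁻¹`:
`E R_n^{(k)} = ∫₀¹ Q(u) g_n^{(k)}(u) du`. -/
theorem stmt13_general (k n : ℕ) (hk : 1 ≤ k) (μ σ : ℝ) (hσ : 0 < σ) (Q : ℝ → ℝ)
    (hmono : MonotoneOn Q (Set.Ioo 0 1))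
    (hmean : ∫ u in (0:ℝ)..1, Q u = μ)
    (hvar : ∫ u in (0:ℝ)..1, (Q u - μ) ^ 2 = σ ^ 2)
    (hint2 : IntervalIntegrable (fun u => (Q u) ^ 2) MeasureTheory.volume 0 1) :
    ((∫ u in (0:ℝ)..1, Q u * recg k n u) - μ) / σ ≤
      Real.sqrt ((k : ℝ) ^ (2 * (n + 1)) * (Nat.factorial (2 * n)) /
        ((Nat.factorial n : ℝ) ^ 2 * (2 * (k : ℝ) - 1) ^ (2 * n + 1)) - 1) := by
  set ν := volume.restrict (Ioo (0 : ℝ) 1)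
  have : IsProbabilityMeasure ν := ⟨by simp [ν]⟩
  simp only [intervalIntegral.integral_of_le zero_le_one, integral_Ioc_eq_integral_Ioo]
    at hmean hvar ⊢
  have hQ : MemLp Q 2 ν := (memLp_two_iff_integrable_sq
    (aemeasurable_restrict_of_monotoneOn measurableSet_Ioo hmono).aestronglyMeasurable).2
    ((intervalIntegrable_iff_integrableOn_Ioo_of_le zero_le_one).1 hint2)
  have hg := memLp_recg k n
  have hcov : cov[Q, recg k n; ν] = (∫ u in Ioo 0 1, Q u * recg k n u) - μ := by
    rw [covariance_eq_sub hQ hg, hmean, integral_recg hk, mul_one]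
    rfl
  have hvarQ : Var[Q; ν] = σ ^ 2 := by rw [variance_eq_integral hQ.aemeasurable, hmean, hvar]
  have hvarg : Var[recg k n; ν] = (k : ℝ) ^ (2 * (n + 1)) * (2 * n)! /
      ((n ! : ℝ) ^ 2 * (2 * k - 1) ^ (2 * n + 1)) - 1 := by
    rw [variance_eq_sub hg, integral_recg hk, one_pow, ← integral_recg_sq hk n]
    rfl
  have hcs := covariance_sq_le_variance_mul_variance hQ hg
  rw [hcov, hvarQ, hvarg] at hcs
  refine (le_abs_self _).trans (abs_le_sqrt ?_)
  rw [div_pow, div_le_iff₀ (by positivity)]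
  linarith

/-- The mean-standard-deviation bound on the expected n-th k-th record value,
with the expectation written via the quantile function `Q = F⁻¹`:
`E R_n^{(k)} = ∫₀¹ Q(u) g_n^{(k)}(u) du`. -/
theorem stmt13 (k n : ℕ) (hk : 1 ≤ k) (μ σ : ℝ) (hσ : 0 < σ) (Q : ℝ → ℝ)
    (hmono : MonotoneOn Q (Set.Ioo 0 1))
    (hmean : ∫ u in (0:ℝ)..1, Q u = μ)
    (hvar : ∫ u in (0:ℝ)..1, (Q u - μ) ^ 2 = σ ^ 2)
    (hint2 : IntervalIntegrable (fun u => (Q u) ^ 2) MeasureTheory.volume 0 1)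
    (hint : IntervalIntegrable (fun u => Q u * recg k n u) MeasureTheory.volume 0 1) :
    ((∫ u in (0:ℝ)..1, Q u * recg k n u) - μ) / σ ≤
      Real.sqrt ((k : ℝ) ^ (2 * (n + 1)) * (Nat.factorial (2 * n)) /
        ((Nat.factorial n : ℝ) ^ 2 * (2 * (k : ℝ) - 1) ^ (2 * n + 1)) - 1) :=
  stmt13_general k n hk μ σ hσ Q hmono hmean hvar hint2
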